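/- arXiv:0911.1552 — 10 statements merged into one kernel-verified Lean document; each statement's English description precedes it below -/
import Mathlib

section
/- Let (L → M → N) be a 2-crossed module of groups. Then the assignment ᵐl := l · {∂₁(l)⁻¹, m} defines a left action of M on L by group automorphisms; that is, ¹l = l, ^{m₁ m₂}l = ^{m₁}(^{m₂}l) for all m₁, m₂ ∈ M and l ∈ L, and for each m ∈ M the map l ↦ ᵐl is a group automorphism of L. -/
/-- A 2-crossed module `(L → M → N)`: homomorphisms `d1 : L →* M`, `d2 : M →* N` with
`d2 ∘ d1` trivial, left actions of `N` on `L` and `M` by group automorphisms under which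
`d1` and `d2` are equivariant, and an `N`-equivariant Peiffer lifting `pf : M → M → L`
satisfying axioms (ii)-(vi).  In axiom (v), `^{m}l` denotes the induced action of `M`
on `L`, `^{m}l = l * pf (d1 l)⁻¹ m`. -/
structure TwoCrossedModule (L M N : Type*) [Group L] [Group M] [Group N] where
  d1 : L →* M
  d2 : M →* N
  d2_d1 : ∀ l : L, d2 (d1 l) = 1
  actL : N → L → L
  actM : N → M → M
  actL_one : ∀ l : L, actL 1 l = l
  actL_mul : ∀ (n₁ n₂ : N) (l : L), actL (n₁ * n₂) l = actL n₁ (actL n₂ l)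
  actL_map_mul : ∀ (n : N) (l₁ l₂ : L), actL n (l₁ * l₂) = actL n l₁ * actL n l₂
  actM_one : ∀ m : M, actM 1 m = m
  actM_mul : ∀ (n₁ n₂ : N) (m : M), actM (n₁ * n₂) m = actM n₁ (actM n₂ m)
  actM_map_mul : ∀ (n : N) (m₁ m₂ : M), actM n (m₁ * m₂) = actM n m₁ * actM n m₂
  d1_equivar : ∀ (n : N) (l : L), d1 (actL n l) = actM n (d1 l)
  d2_equivar : ∀ (n : N) (m : M), d2 (actM n m) = n * d2 m * n⁻¹
  pf : M → M → L
  pf_equivar : ∀ (n : N) (m₁ m₂ : M), actL n (pf m₁ m₂) = pf (actM n m₁) (actM n m₂)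
  ax_ii : ∀ m₁ m₂ : M, m₁ * m₂ * m₁⁻¹ = d1 (pf m₁ m₂) * actM (d2 m₁) m₂
  ax_iii : ∀ l₁ l₂ : L, pf (d1 l₁) (d1 l₂) = l₁ * l₂ * l₁⁻¹ * l₂⁻¹
  ax_iv : ∀ m₁ m₂ m₃ : M,
    pf (m₁ * m₂) m₃ = pf m₁ (m₂ * m₃ * m₂⁻¹) * actL (d2 m₁) (pf m₂ m₃)
  ax_v : ∀ m₁ m₂ m₃ : M,
    pf m₁ (m₂ * m₃) = pf m₁ m₂ * (pf m₁ m₃ * pf (d1 (pf m₁ m₃))⁻¹ (m₁ * m₂ * m₁⁻¹))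
  ax_vi : ∀ (l : L) (m : M), pf (d1 l) m * pf m (d1 l) = l * actL (d2 m) l⁻¹

/-- The induced left action of `M` on `L` in a 2-crossed module: `ᵐl := l · {∂₁(l)⁻¹, m}`. -/
def mact {L M N : Type*} [Group L] [Group M] [Group N] (T : TwoCrossedModule L M N)
    (m : M) (l : L) : L :=
  l * T.pf (T.d1 l)⁻¹ m

namespace TwoCrossedModule

variable {L M N : Type*} [Group L] [Group M] [Group N] (T : TwoCrossedModule L M N)

lemma aL_one (n : N) : T.actL n 1 = 1 := by
  have h := T.actL_map_mul n 1 1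
  rw [mul_one] at h
  have h2 := h.symm.trans (mul_one (T.actL n 1)).symm
  exact mul_left_cancel h2

lemma aL_inv (n : N) (l : L) : T.actL n l⁻¹ = (T.actL n l)⁻¹ := by
  apply eq_inv_of_mul_eq_one_left
  rw [← T.actL_map_mul, inv_mul_cancel, T.aL_one]

lemma pf_one_left (m : M) : T.pf 1 m = 1 := by
  have h := T.ax_iv 1 1 m
  simp only [one_mul, mul_one, inv_one, map_one, T.actL_one] at h
  have h2 := h.symm.trans (mul_one (T.pf 1 m)).symm
  exact mul_left_cancel h2

lemma pf_one_right (m : M) : T.pf m 1 = 1 := by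
  have h := T.ax_vi 1 m
  simp only [map_one, T.pf_one_left, one_mul, inv_one, T.aL_one] at h
  exact h

lemma conj_d1 (m : M) (l : L) :
    m * T.d1 l * m⁻¹ = T.d1 (T.pf m (T.d1 l) * T.actL (T.d2 m) l) := by
  rw [map_mul, T.d1_equivar]
  exact T.ax_ii m (T.d1 l)

lemma peiffer (x y : L) : mact T (T.d1 x) y = x * y * x⁻¹ := by
  unfold mact
  rw [← map_inv, T.ax_iii]
  group

lemma ax_v' (m₁ m₂ m₃ : M) :
    T.pf m₁ (m₂ * m₃) = T.pf m₁ m₂ * mact T (m₁ * m₂ * m₁⁻¹) (T.pf m₁ m₃) :=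
  T.ax_v m₁ m₂ m₃

lemma pf_inv_right (m : M) (l : L) :
    T.pf m (T.d1 l)⁻¹ =
      (T.actL (T.d2 m) l)⁻¹ * (T.pf m (T.d1 l))⁻¹ * T.actL (T.d2 m) l := by
  have h := T.ax_v' m (T.d1 l) (T.d1 l)⁻¹
  rw [mul_inv_cancel, T.pf_one_right, T.conj_d1, T.peiffer] at h
  -- h : 1 = s * (X * z * X⁻¹) with X = s * g
  have h2 := eq_inv_of_mul_eq_one_right h.symm
  -- h2 : (s*g) * z * (s*g)⁻¹ = s⁻¹
  have h3 : T.pf m (T.d1 l)⁻¹ =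
      (T.pf m (T.d1 l) * T.actL (T.d2 m) l)⁻¹ *
        (T.pf m (T.d1 l) * T.actL (T.d2 m) l * T.pf m (T.d1 l)⁻¹ *
          (T.pf m (T.d1 l) * T.actL (T.d2 m) l)⁻¹) *
        (T.pf m (T.d1 l) * T.actL (T.d2 m) l) := by group
  rw [h2] at h3
  rw [h3]; group

lemma mact_eq_psi (m : M) (l : L) :
    mact T m l = T.pf m (T.d1 l) * T.actL (T.d2 m) l := by
  have h := T.ax_vi l⁻¹ m
  rw [map_inv, inv_inv, T.pf_inv_right] at h
  -- h : pf (d1 l)⁻¹ m * (g⁻¹ * s⁻¹ * g) = l⁻¹ * g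
  have h4 : T.pf (T.d1 l)⁻¹ m =
      T.pf (T.d1 l)⁻¹ m *
        ((T.actL (T.d2 m) l)⁻¹ * (T.pf m (T.d1 l))⁻¹ * T.actL (T.d2 m) l) *
        ((T.actL (T.d2 m) l)⁻¹ * T.pf m (T.d1 l) * T.actL (T.d2 m) l) := by group
  rw [h] at h4
  show l * T.pf (T.d1 l)⁻¹ m = _
  rw [h4]; group

lemma conj_d1m (m : M) (l : L) : m * T.d1 l * m⁻¹ = T.d1 (mact T m l) := by
  rw [T.conj_d1, ← T.mact_eq_psi]

lemma psi_pf (m : M) (l : L) :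
    T.pf m (T.d1 l) = mact T m l * (T.actL (T.d2 m) l)⁻¹ := by
  rw [T.mact_eq_psi]; group

lemma mact_eq_chi (m : M) (l : L) : mact T m l = (T.pf (T.d1 l) m)⁻¹ * l := by
  have h := T.ax_vi l m
  have h2 : T.pf m (T.d1 l) =
      (T.pf (T.d1 l) m)⁻¹ * (T.pf (T.d1 l) m * T.pf m (T.d1 l)) := by group
  rw [h] at h2
  rw [T.mact_eq_psi, h2, T.aL_inv]; group

lemma mact_one (l : L) : mact T 1 l = l := by
  show l * T.pf (T.d1 l)⁻¹ 1 = l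
  rw [T.pf_one_right, mul_one]

lemma mact_mul (m₁ m₂ : M) (l : L) :
    mact T (m₁ * m₂) l = mact T m₁ (mact T m₂ l) := by
  simp only [T.mact_eq_psi]
  rw [← T.conj_d1 m₂ l, T.ax_iv m₁ m₂ (T.d1 l), map_mul T.d2 m₁ m₂,
    T.actL_mul, T.actL_map_mul]
  group

lemma mact_conj (m : M) (l₁ l₂ : L) :
    mact T m (l₁ * l₂ * l₁⁻¹) = mact T m l₁ * mact T m l₂ * (mact T m l₁)⁻¹ := by
  have h1 := T.ax_iv m (T.d1 l₁) (T.d1 l₂)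
  rw [T.ax_iii] at h1
  have h2 := T.ax_iv (m * T.d1 l₁ * m⁻¹) m (T.d1 l₂)
  have e : m * T.d1 l₁ * m⁻¹ * m = m * T.d1 l₁ := by group
  have hd2 : T.d2 (m * T.d1 l₁ * m⁻¹) = 1 := by simp [T.d2_d1]
  rw [e, hd2, T.actL_one, T.conj_d1 m l₁, T.conj_d1 m l₂, T.ax_iii,
    ← T.mact_eq_psi m l₁, ← T.mact_eq_psi m l₂] at h2
  have h3 := h1.symm.trans h2
  -- h3 : pf m (a*b*a⁻¹) * actL n (l₁l₂l₁⁻¹l₂⁻¹) = (A*B*A⁻¹*B⁻¹) * pf m (d1 l₂)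
  conv_lhs => rw [T.mact_eq_psi]
  have hd1 : T.d1 (l₁ * l₂ * l₁⁻¹) = T.d1 l₁ * T.d1 l₂ * (T.d1 l₁)⁻¹ := by
    rw [map_mul, map_mul, map_inv]
  rw [hd1]
  have hsplit : T.actL (T.d2 m) (l₁ * l₂ * l₁⁻¹) =
      T.actL (T.d2 m) (l₁ * l₂ * l₁⁻¹ * l₂⁻¹) * T.actL (T.d2 m) l₂ := by
    rw [← T.actL_map_mul]; congr 1; group
  rw [hsplit, ← mul_assoc, h3, mul_assoc, ← T.mact_eq_psi]
  group

lemma pf_conj_d1 (m : M) (l₁ l₂ : L) :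
    T.pf (T.d1 l₂ * m * (T.d1 l₂)⁻¹) (T.d1 l₁) =
      T.pf (T.d1 l₂) m * (T.pf (T.d1 l₁) m)⁻¹ * l₁ * (T.pf (T.d1 l₂) m)⁻¹ *
        (T.actL (T.d2 m) l₁)⁻¹ := by
  have h5 := T.ax_iv (T.d1 l₂ * m) (T.d1 l₂)⁻¹ (T.d1 l₁)
  rw [inv_inv] at h5
  have hb : T.d2 (T.d1 l₂ * m) = T.d2 m := by simp [T.d2_d1]
  rw [hb] at h5
  have hw : (T.d1 l₂)⁻¹ * T.d1 l₁ * T.d1 l₂ = T.d1 (l₂⁻¹ * l₁ * l₂) := by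
    rw [map_mul, map_mul, map_inv]
  rw [hw] at h5
  have h6 := T.ax_iv (T.d1 l₂) m (T.d1 (l₂⁻¹ * l₁ * l₂))
  rw [T.d2_d1, T.actL_one] at h6
  rw [h6, T.conj_d1m, T.ax_iii, T.psi_pf m (l₂⁻¹ * l₁ * l₂)] at h5
  have hpfinv : T.pf (T.d1 l₂)⁻¹ (T.d1 l₁) = l₂⁻¹ * l₁ * l₂ * l₁⁻¹ := by
    rw [← map_inv, T.ax_iii]; group
  rw [hpfinv] at h5
  have hQ : mact T m (l₂⁻¹ * l₁ * l₂) =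
      (mact T m l₂)⁻¹ * mact T m l₁ * mact T m l₂ := by
    have h := T.mact_conj m l₂ (l₂⁻¹ * l₁ * l₂)
    rw [show l₂ * (l₂⁻¹ * l₁ * l₂) * l₂⁻¹ = l₁ from by group] at h
    have h2 : mact T m (l₂⁻¹ * l₁ * l₂) =
        (mact T m l₂)⁻¹ *
          (mact T m l₂ * mact T m (l₂⁻¹ * l₁ * l₂) * (mact T m l₂)⁻¹) *
          mact T m l₂ := by group
    rw [← h] at h2
    exact h2
  rw [hQ, T.mact_eq_chi m l₁, T.mact_eq_chi m l₂] at h5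
  have hact' : T.actL (T.d2 m) (l₂⁻¹ * l₁ * l₂ * l₁⁻¹) =
      T.actL (T.d2 m) (l₂⁻¹ * l₁ * l₂) * (T.actL (T.d2 m) l₁)⁻¹ := by
    rw [← T.aL_inv, ← T.actL_map_mul]
  rw [hact'] at h5
  rw [h5]; group

lemma mact_mulL (m : M) (l₁ l₂ : L) :
    mact T m (l₁ * l₂) = mact T m l₁ * mact T m l₂ := by
  simp only [T.mact_eq_chi]
  rw [map_mul]
  suffices h : T.pf (T.d1 l₁ * T.d1 l₂) m =
      l₁ * T.pf (T.d1 l₂) m * l₁⁻¹ * T.pf (T.d1 l₁) m by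
    rw [h]; group
  rw [T.ax_iv (T.d1 l₁) (T.d1 l₂) m, T.d2_d1, T.actL_one]
  have hd2eq : T.d2 (T.d1 l₂ * m * (T.d1 l₂)⁻¹) = T.d2 m := by simp [T.d2_d1]
  have hvi := T.ax_vi l₁ (T.d1 l₂ * m * (T.d1 l₂)⁻¹)
  rw [hd2eq, T.pf_conj_d1, T.aL_inv] at hvi
  have h7 : T.pf (T.d1 l₁) (T.d1 l₂ * m * (T.d1 l₂)⁻¹) =
      T.pf (T.d1 l₁) (T.d1 l₂ * m * (T.d1 l₂)⁻¹) *
        (T.pf (T.d1 l₂) m * (T.pf (T.d1 l₁) m)⁻¹ * l₁ * (T.pf (T.d1 l₂) m)⁻¹ *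
          (T.actL (T.d2 m) l₁)⁻¹) *
        (T.actL (T.d2 m) l₁ * T.pf (T.d1 l₂) m * l₁⁻¹ * T.pf (T.d1 l₁) m *
          (T.pf (T.d1 l₂) m)⁻¹) := by group
  rw [hvi] at h7
  rw [h7]; group

lemma mact_bij (m : M) : Function.Bijective (mact T m) := by
  refine Function.bijective_iff_has_inverse.mpr ⟨mact T m⁻¹, fun l => ?_, fun l => ?_⟩
  · rw [← T.mact_mul, inv_mul_cancel, T.mact_one]
  · rw [← T.mact_mul, mul_inv_cancel, T.mact_one]

end TwoCrossedModule

/-- In a 2-crossed module `(L → M → N)`, the assignment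
`ᵐl := l · {∂₁(l)⁻¹, m}` defines a left action of `M` on `L` by group automorphisms. -/
theorem statement1 {L M N : Type*} [Group L] [Group M] [Group N]
    (T : TwoCrossedModule L M N) :
    (∀ l : L, mact T 1 l = l) ∧
    (∀ (m₁ m₂ : M) (l : L), mact T (m₁ * m₂) l = mact T m₁ (mact T m₂ l)) ∧
    (∀ (m : M) (l₁ l₂ : L), mact T m (l₁ * l₂) = mact T m l₁ * mact T m l₂) ∧
    (∀ m : M, Function.Bijective (mact T m)) := by
  exact ⟨T.mact_one, T.mact_mul, T.mact_mulL, T.mact_bij⟩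
end

section
/- Let (L → M → N) be a 2-crossed module of groups, and let M act on L by the induced action ᵐl := l · {∂₁(l)⁻¹, m}. Then (L → M) with the homomorphism ∂₁ and this action is a crossed module: the Peiffer condition ^{∂₁(l)}l' = l l' l⁻¹ holds for all l, l' ∈ L, and ∂₁(ᵐl) = m ∂₁(l) m⁻¹ holds for all m ∈ M, l ∈ L. -/
/-- In a 2-crossed module `(L → M → N)`, the homomorphism `∂₁` with the
induced action `ᵐl := l · {∂₁(l)⁻¹, m}` makes `(L → M)` a crossed module: the Peiffer
condition and equivariance hold. -/
theorem statement2 {L M N : Type*} [Group L] [Group M] [Group N]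
    (T : TwoCrossedModule L M N) :
    (∀ l l' : L, mact T (T.d1 l) l' = l * l' * l⁻¹) ∧
    (∀ (m : M) (l : L), T.d1 (mact T m l) = m * T.d1 l * m⁻¹) := by
  constructor
  · intro l l'
    have h : (T.d1 l')⁻¹ = T.d1 l'⁻¹ := by rw [map_inv]
    rw [mact, h, T.ax_iii]
    group
  · intro m l
    have h2 : T.d2 (T.d1 l)⁻¹ = 1 := by rw [map_inv, T.d2_d1, inv_one]
    have h := T.ax_ii (T.d1 l)⁻¹ m
    rw [h2, T.actM_one] at h
    have h3 : T.d1 (T.pf (T.d1 l)⁻¹ m) = (T.d1 l)⁻¹ * m * T.d1 l * m⁻¹ := by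
      rw [eq_comm, mul_inv_eq_iff_eq_mul, ← h]; group
    rw [mact, map_mul, h3]
    group
end

section
/- Let (L → M → N) be a 2-crossed module of groups. Then: (a) the image ∂₁(L) is a normal subgroup of M; (b) ∂₂ is constant on left cosets of ∂₁(L), so it induces a group homomorphism ∂₂' : M/∂₁(L) → N; (c) the action of N on M preserves ∂₁(L) and hence induces an action of N on M/∂₁(L) by group automorphisms; (d) with these data, (M/∂₁(L) → N) is a crossed module, i.e. the Peiffer condition ^{∂₂'(x)}y = x y x⁻¹ holds for all x, y ∈ M/∂₁(L) and ∂₂'(ⁿx) = n ∂₂'(x) n⁻¹ holds for all n ∈ N, x ∈ M/∂₁(L). -/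
/-- In a 2-crossed module `(L → M → N)`:
(a) `∂₁(L)` is normal in `M`;
(b) `∂₂` is constant on left cosets of `∂₁(L)` and induces a homomorphism
    `∂₂' : M/∂₁(L) →* N`;
(c) the action of `N` on `M` preserves `∂₁(L)` and induces an action of `N` on
    `M/∂₁(L)` by group automorphisms;
(d) with these data `(M/∂₁(L) → N)` is a crossed module. -/
theorem statement3 {L M N : Type*} [Group L] [Group M] [Group N]
    (T : TwoCrossedModule L M N) :
    ∃ _hN : T.d1.range.Normal,
      (∀ m₁ m₂ : M, (∃ l : L, m₂ = T.d1 l * m₁) → T.d2 m₁ = T.d2 m₂) ∧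
      (∀ n : N, ∀ x ∈ T.d1.range, T.actM n x ∈ T.d1.range) ∧
      ∃ d2' : M ⧸ T.d1.range →* N,
        (∀ m : M, d2' (QuotientGroup.mk m) = T.d2 m) ∧
        ∃ act' : N → M ⧸ T.d1.range → M ⧸ T.d1.range,
          (∀ (n : N) (m : M), act' n (QuotientGroup.mk m) = QuotientGroup.mk (T.actM n m)) ∧
          (∀ x : M ⧸ T.d1.range, act' 1 x = x) ∧
          (∀ (n₁ n₂ : N) (x : M ⧸ T.d1.range), act' (n₁ * n₂) x = act' n₁ (act' n₂ x)) ∧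
          (∀ (n : N) (x y : M ⧸ T.d1.range), act' n (x * y) = act' n x * act' n y) ∧
          (∀ x y : M ⧸ T.d1.range, act' (d2' x) y = x * y * x⁻¹) ∧
          (∀ (n : N) (x : M ⧸ T.d1.range), d2' (act' n x) = n * d2' x * n⁻¹) := by
  have hN : T.d1.range.Normal := by
    constructor
    rintro x ⟨l, rfl⟩ m
    refine ⟨T.pf m (T.d1 l) * T.actL (T.d2 m) l, ?_⟩
    rw [map_mul, T.d1_equivar]
    exact (T.ax_ii m (T.d1 l)).symm
  haveI := hN
  have hc : ∀ n : N, ∀ x ∈ T.d1.range, T.actM n x ∈ T.d1.range := by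
    rintro n x ⟨l, rfl⟩
    exact ⟨T.actL n l, T.d1_equivar n l⟩
  have hker : ∀ x ∈ T.d1.range, T.d2 x = 1 := by
    rintro x ⟨l, rfl⟩; exact T.d2_d1 l
  refine ⟨hN, ?_, hc, ?_⟩
  · rintro m₁ m₂ ⟨l, rfl⟩
    rw [map_mul, T.d2_d1, one_mul]
  · have actMhom : ∀ n : N, ∃ f : M →* M, ∀ m, f m = T.actM n m := by
      intro n
      have h1 : T.actM n 1 = 1 := by
        have := T.actM_map_mul n 1 1
        rw [one_mul] at this
        exact mul_right_cancel (a := T.actM n 1) (by rw [one_mul, ← this])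
      exact ⟨⟨⟨T.actM n, h1⟩, T.actM_map_mul n⟩, fun _ => rfl⟩
    refine ⟨QuotientGroup.lift T.d1.range T.d2 hker, fun m => rfl, ?_⟩
    choose Af hAf using actMhom
    refine ⟨fun n => QuotientGroup.lift T.d1.range
      ((QuotientGroup.mk' T.d1.range).comp (Af n))
      (fun x hx => by
        show QuotientGroup.mk (Af n x) = 1
        rw [hAf, QuotientGroup.eq_one_iff]
        exact hc n x hx), ?_, ?_, ?_, ?_, ?_, ?_⟩
    · intro n m
      show QuotientGroup.mk (Af n m) = _
      rw [hAf]
    · intro x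
      refine QuotientGroup.induction_on x (fun m => ?_)
      show QuotientGroup.mk (Af 1 m) = QuotientGroup.mk m
      rw [hAf, T.actM_one]
    · intro n₁ n₂ x
      refine QuotientGroup.induction_on x (fun m => ?_)
      show QuotientGroup.mk (Af (n₁ * n₂) m) = _
      rw [hAf, T.actM_mul]
      show _ = QuotientGroup.mk (Af n₁ (Af n₂ m))
      rw [hAf, hAf]
    · intro n x y
      refine QuotientGroup.induction_on x (fun a => QuotientGroup.induction_on y (fun b => ?_))
      show QuotientGroup.mk (Af n (a * b)) = QuotientGroup.mk (Af n a) * QuotientGroup.mk (Af n b)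
      rw [← QuotientGroup.mk_mul, hAf, hAf, hAf, T.actM_map_mul]
    · intro x y
      refine QuotientGroup.induction_on x (fun a => QuotientGroup.induction_on y (fun b => ?_))
      show QuotientGroup.mk (Af (T.d2 a) b) =
        QuotientGroup.mk a * QuotientGroup.mk b * (QuotientGroup.mk a : M ⧸ T.d1.range)⁻¹
      rw [hAf, ← QuotientGroup.mk_inv, ← QuotientGroup.mk_mul, ← QuotientGroup.mk_mul,
        T.ax_ii, QuotientGroup.mk_mul]
      have h1 : (QuotientGroup.mk (T.d1 (T.pf a b)) : M ⧸ T.d1.range) = 1 :=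
        (QuotientGroup.eq_one_iff (T.d1 (T.pf a b))).2 ⟨T.pf a b, rfl⟩
      rw [h1, one_mul]
    · intro n x
      refine QuotientGroup.induction_on x (fun m => ?_)
      show T.d2 (Af n m) = n * T.d2 m * n⁻¹
      rw [hAf]
      exact T.d2_equivar n m
end

section
/- Let (L → M → N) be a 2-crossed module of groups, with M acting on L by the induced action ᵐl := l · {∂₁(l)⁻¹, m}. Then the multiplication on N × M × L defined by (n₁, m₁, l₁)(n₂, m₂, l₂) := (n₁ n₂, m₁ · ^{n₁}m₂, l₁ · ^{m₁}(^{n₁}l₂)) is a group multiplication: it is associative, has identity element (1, 1, 1), and every element has a two-sided inverse. -/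
/-- The horizontal multiplication on `N × M × L` (3-arrows of the associated Gray
3-groupoid): `(n₁, m₁, l₁)(n₂, m₂, l₂) := (n₁n₂, m₁ · ^{n₁}m₂, l₁ · ^{m₁}(^{n₁}l₂))`. -/
def hmul {L M N : Type*} [Group L] [Group M] [Group N] (T : TwoCrossedModule L M N)
    (x y : N × M × L) : N × M × L :=
  (x.1 * y.1, x.2.1 * T.actM x.1 y.2.1, x.2.2 * mact T x.2.1 (T.actL x.1 y.2.2))


section Aux

variable {L M N : Type*} [Group L] [Group M] [Group N] (T : TwoCrossedModule L M N)

lemma TCM_actL_map_one (n : N) : T.actL n 1 = 1 := by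
  have h := T.actL_map_mul n 1 1
  rw [mul_one] at h
  exact (left_eq_mul.mp h)

lemma TCM_actL_inv (n : N) (l : L) : T.actL n l⁻¹ = (T.actL n l)⁻¹ := by
  have h := T.actL_map_mul n l l⁻¹
  rw [mul_inv_cancel, TCM_actL_map_one] at h
  exact (inv_eq_of_mul_eq_one_right h.symm).symm

lemma TCM_actM_map_one (n : N) : T.actM n 1 = 1 := by
  have h := T.actM_map_mul n 1 1
  rw [mul_one] at h
  exact (left_eq_mul.mp h)

lemma TCM_actM_inv (n : N) (m : M) : T.actM n m⁻¹ = (T.actM n m)⁻¹ := by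
  have h := T.actM_map_mul n m m⁻¹
  rw [mul_inv_cancel, TCM_actM_map_one] at h
  exact (inv_eq_of_mul_eq_one_right h.symm).symm

lemma TCM_pf_one_left (m : M) : T.pf 1 m = 1 := by
  have h := T.ax_iv 1 1 m
  simp only [one_mul, mul_one, inv_one, map_one, T.actL_one] at h
  exact (left_eq_mul.mp h)

lemma TCM_pf_one_right (m : M) : T.pf m 1 = 1 := by
  have hd : ∀ l : L, T.pf (T.d1 l) 1 = 1 := by
    intro l
    have h := T.ax_iii l 1
    simpa using h
  have h := T.ax_v m 1 1
  simp only [mul_one, one_mul, mul_inv_cancel] at h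
  rw [← map_inv, hd, mul_one] at h
  exact (left_eq_mul.mp h)

lemma TCM_mact_one_act (l : L) : mact T 1 l = l := by
  unfold mact
  rw [TCM_pf_one_right, mul_one]

lemma TCM_mact_one (m : M) : mact T m 1 = 1 := by
  unfold mact
  rw [map_one, inv_one, TCM_pf_one_left, mul_one]

lemma TCM_d1_pf_d1 (x : L) (m : M) :
    T.d1 (T.pf (T.d1 x) m) = T.d1 x * m * (T.d1 x)⁻¹ * m⁻¹ := by
  have h := T.ax_ii (T.d1 x) m
  rw [T.d2_d1, T.actM_one] at h
  calc T.d1 (T.pf (T.d1 x) m) = (T.d1 (T.pf (T.d1 x) m) * m) * m⁻¹ := by group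
    _ = (T.d1 x * m * (T.d1 x)⁻¹) * m⁻¹ := by rw [← h]
    _ = T.d1 x * m * (T.d1 x)⁻¹ * m⁻¹ := by group

lemma TCM_mact_d1 (c : L) (l : L) : mact T (T.d1 c) l = c * l * c⁻¹ := by
  unfold mact
  rw [← map_inv, T.ax_iii]
  group

lemma TCM_d1_mact (m : M) (l : L) : T.d1 (mact T m l) = m * T.d1 l * m⁻¹ := by
  unfold mact
  rw [map_mul, ← map_inv, TCM_d1_pf_d1, map_inv]
  group

lemma TCM_pf_absorb (l : L) (m : M) :
    T.pf (T.d1 l⁻¹) (m * (T.d1 l)⁻¹) = T.pf (T.d1 l⁻¹) m := by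
  have h0 : T.pf (T.d1 l⁻¹) (T.d1 l)⁻¹ = 1 := by
    rw [← map_inv, T.ax_iii]
    group
  have h := T.ax_v (T.d1 l⁻¹) m (T.d1 l)⁻¹
  rw [h0, map_one, inv_one, TCM_pf_one_left, mul_one, mul_one] at h
  exact h

lemma TCM_pf_conj (l : L) (m : M) :
    T.pf (T.d1 l⁻¹) (T.d1 l * m * (T.d1 l)⁻¹) = l * T.pf (T.d1 l⁻¹) m * l⁻¹ := by
  have h := T.ax_v (T.d1 l⁻¹) (T.d1 l) (m * (T.d1 l)⁻¹)
  rw [TCM_pf_absorb] at h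
  have h1 : T.pf (T.d1 l⁻¹) (T.d1 l) = 1 := by
    rw [T.ax_iii]; group
  rw [h1, one_mul] at h
  have h2 : T.d1 l⁻¹ * T.d1 l * (T.d1 l⁻¹)⁻¹ = T.d1 l := by
    rw [map_inv]; group
  rw [h2] at h
  have h3 : T.pf (T.d1 (T.pf (T.d1 l⁻¹) m))⁻¹ (T.d1 l)
      = (T.pf (T.d1 l⁻¹) m)⁻¹ * l * T.pf (T.d1 l⁻¹) m * l⁻¹ := by
    rw [← map_inv, T.ax_iii]; group
  rw [h3] at h
  have h4 : T.d1 l * m * (T.d1 l)⁻¹ = T.d1 l * (m * (T.d1 l)⁻¹) := by group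
  rw [h4, h]
  group

lemma TCM_pf_d1_inv (l : L) (m : M) :
    T.pf (T.d1 l) m = l * (T.pf (T.d1 l⁻¹) m)⁻¹ * l⁻¹ := by
  have h := T.ax_iv (T.d1 l⁻¹) (T.d1 l) m
  rw [T.d2_d1, T.actL_one] at h
  have h0 : T.d1 l⁻¹ * T.d1 l = 1 := by rw [map_inv]; group
  rw [h0, TCM_pf_one_left, TCM_pf_conj] at h
  have h4 : T.pf (T.d1 l) m = (l * T.pf (T.d1 l⁻¹) m * l⁻¹)⁻¹ :=
    eq_inv_of_mul_eq_one_right h.symm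
  rw [h4]; group

lemma TCM_mact_inv (m : M) (l : L) : mact T m l⁻¹ = (mact T m l)⁻¹ := by
  unfold mact
  have h0 : (T.d1 l⁻¹)⁻¹ = T.d1 l := by rw [map_inv, inv_inv]
  rw [h0, TCM_pf_d1_inv, ← map_inv]
  group

lemma TCM_pf_snd_d1 (m : M) (w : L) :
    T.pf m (T.d1 w) = mact T m w * T.actL (T.d2 m) w⁻¹ := by
  have h := T.ax_vi w m
  rw [TCM_pf_d1_inv] at h
  have h5 : T.pf m (T.d1 w)
      = (w * (T.pf (T.d1 w⁻¹) m)⁻¹ * w⁻¹)⁻¹ * (w * T.actL (T.d2 m) w⁻¹) := by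
    rw [← h]; group
  rw [h5]
  unfold mact
  rw [← map_inv]
  group

lemma TCM_mact_comp (m₁ m₂ : M) (w : L) :
    mact T (m₁ * m₂) w = mact T m₁ (mact T m₂ w) := by
  have h := T.ax_iv m₁ m₂ (T.d1 w)
  rw [show m₂ * T.d1 w * m₂⁻¹ = T.d1 (mact T m₂ w) from (TCM_d1_mact T m₂ w).symm] at h
  rw [TCM_pf_snd_d1, TCM_pf_snd_d1, TCM_pf_snd_d1] at h
  rw [T.actL_map_mul, ← T.actL_mul, ← map_mul] at h
  simp only [TCM_actL_inv] at h
  apply mul_right_cancel (b := (T.actL (T.d2 (m₁ * m₂)) w)⁻¹)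
  rw [h]
  group

lemma TCM_mact_d1_mul (c : L) (m : M) (l : L) :
    mact T (T.d1 c * m) l = c * mact T m l * c⁻¹ := by
  rw [TCM_mact_comp, TCM_mact_d1]

lemma TCM_pf_comm (m : M) (w u : L) :
    T.pf (T.d1 w⁻¹) m * (u * w⁻¹ * u⁻¹ * w)
      = (u * w⁻¹ * u⁻¹ * w) * T.pf (T.d1 w⁻¹) m := by
  have way1 : mact T (T.d1 u⁻¹ * m) w = u⁻¹ * (w * T.pf (T.d1 w⁻¹) m) * u := by
    rw [TCM_mact_d1_mul]
    unfold mact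
    rw [← map_inv]
    group
  have way2 : mact T (T.d1 u⁻¹ * m) w
      = w * (T.pf (T.d1 w⁻¹) (T.d1 u⁻¹) * (T.pf (T.d1 w⁻¹) m
        * T.pf (T.d1 (T.pf (T.d1 w⁻¹) m))⁻¹ (T.d1 w⁻¹ * T.d1 u⁻¹ * (T.d1 w⁻¹)⁻¹))) := by
    unfold mact
    rw [← map_inv, T.ax_v]
  have e1 : T.pf (T.d1 w⁻¹) (T.d1 u⁻¹) = w⁻¹ * u⁻¹ * w * u := by
    rw [T.ax_iii]; group
  have e2 : T.d1 w⁻¹ * T.d1 u⁻¹ * (T.d1 w⁻¹)⁻¹ = T.d1 (w⁻¹ * u⁻¹ * w) := by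
    simp only [map_mul, map_inv]; group
  have e3 : T.pf (T.d1 (T.pf (T.d1 w⁻¹) m))⁻¹ (T.d1 (w⁻¹ * u⁻¹ * w))
      = (T.pf (T.d1 w⁻¹) m)⁻¹ * (w⁻¹ * u⁻¹ * w) * T.pf (T.d1 w⁻¹) m
        * (w⁻¹ * u⁻¹ * w)⁻¹ := by
    rw [← map_inv, T.ax_iii]; group
  rw [e1, e2, e3] at way2
  have h := way1.symm.trans way2
  have goal_eq : T.pf (T.d1 w⁻¹) m * (u * w⁻¹ * u⁻¹ * w)
      = (w⁻¹ * u) * (u⁻¹ * (w * T.pf (T.d1 w⁻¹) m) * u) * (w⁻¹ * u⁻¹ * w) := by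
    group
  rw [goal_eq, h]
  group

lemma TCM_mact_mul (m : M) (u v : L) :
    mact T m (u * v) = mact T m u * mact T m v := by
  have a1 : (T.d1 (u * v))⁻¹ = T.d1 v⁻¹ * T.d1 u⁻¹ := by
    rw [map_mul, mul_inv_rev, ← map_inv, ← map_inv]
  have a2 := T.ax_iv (T.d1 v⁻¹) (T.d1 u⁻¹) m
  rw [T.d2_d1, T.actL_one] at a2
  have a3 : T.d1 u⁻¹ * m * (T.d1 u⁻¹)⁻¹ = T.d1 (T.pf (T.d1 u⁻¹) m) * m := by
    rw [TCM_d1_pf_d1]; group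
  rw [a3] at a2
  have a4 := T.ax_v (T.d1 v⁻¹) (T.d1 (T.pf (T.d1 u⁻¹) m)) m
  have a5 : T.pf (T.d1 v⁻¹) (T.d1 (T.pf (T.d1 u⁻¹) m))
      = v⁻¹ * T.pf (T.d1 u⁻¹) m * v * (T.pf (T.d1 u⁻¹) m)⁻¹ := by
    rw [T.ax_iii]; group
  have a6 : T.d1 v⁻¹ * T.d1 (T.pf (T.d1 u⁻¹) m) * (T.d1 v⁻¹)⁻¹
      = T.d1 (v⁻¹ * T.pf (T.d1 u⁻¹) m * v) := by
    simp only [map_mul, map_inv]; group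
  have a7 : T.pf (T.d1 (T.pf (T.d1 v⁻¹) m))⁻¹ (T.d1 (v⁻¹ * T.pf (T.d1 u⁻¹) m * v))
      = (T.pf (T.d1 v⁻¹) m)⁻¹ * (v⁻¹ * T.pf (T.d1 u⁻¹) m * v) * T.pf (T.d1 v⁻¹) m
        * (v⁻¹ * T.pf (T.d1 u⁻¹) m * v)⁻¹ := by
    rw [← map_inv, T.ax_iii]; group
  rw [a5, a6, a7] at a4
  have comm2 : T.pf (T.d1 v⁻¹) m
        * ((T.pf (T.d1 u⁻¹) m)⁻¹ * v⁻¹ * T.pf (T.d1 u⁻¹) m * v)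
      = ((T.pf (T.d1 u⁻¹) m)⁻¹ * v⁻¹ * T.pf (T.d1 u⁻¹) m * v)
        * T.pf (T.d1 v⁻¹) m := by
    simpa using TCM_pf_comm T m v (T.pf (T.d1 u⁻¹) m)⁻¹
  unfold mact
  rw [show T.pf (T.d1 u)⁻¹ m = T.pf (T.d1 u⁻¹) m by rw [map_inv],
      show T.pf (T.d1 v)⁻¹ m = T.pf (T.d1 v⁻¹) m by rw [map_inv]]
  rw [a1, a2, a4]
  set s := T.pf (T.d1 u⁻¹) m with hs
  set t := T.pf (T.d1 v⁻¹) m with ht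
  calc u * v * (v⁻¹ * s * v * s⁻¹ * (t * (t⁻¹ * (v⁻¹ * s * v) * t * (v⁻¹ * s * v)⁻¹)) * s)
      = u * s * (v * ((s⁻¹ * v⁻¹ * s * v) * t * (s⁻¹ * v⁻¹ * s * v)⁻¹)) := by group
    _ = u * s * (v * (t * (s⁻¹ * v⁻¹ * s * v) * (s⁻¹ * v⁻¹ * s * v)⁻¹)) := by rw [← comm2]
    _ = u * s * (v * t) := by group

lemma TCM_mact_equivar (n : N) (m : M) (l : L) :
    T.actL n (mact T m l) = mact T (T.actM n m) (T.actL n l) := by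
  unfold mact
  rw [T.actL_map_mul, ← map_inv, T.pf_equivar, ← T.d1_equivar, TCM_actL_inv, map_inv]

end Aux

/-- the horizontal multiplication on `N × M × L` is a group multiplication:
associative, with identity `(1,1,1)` and two-sided inverses. -/
theorem statement4 {L M N : Type*} [Group L] [Group M] [Group N]
    (T : TwoCrossedModule L M N) :
    (∀ x y z : N × M × L, hmul T (hmul T x y) z = hmul T x (hmul T y z)) ∧
    (∀ x : N × M × L,
      hmul T ((1, 1, 1) : N × M × L) x = x ∧ hmul T x ((1, 1, 1) : N × M × L) = x) ∧
    (∀ x : N × M × L, ∃ y : N × M × L,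
      hmul T x y = ((1, 1, 1) : N × M × L) ∧ hmul T y x = ((1, 1, 1) : N × M × L)) := by
  refine ⟨?_, ?_, ?_⟩
  · rintro ⟨n₁, m₁, l₁⟩ ⟨n₂, m₂, l₂⟩ ⟨n₃, m₃, l₃⟩
    simp only [hmul, Prod.mk.injEq]
    refine ⟨mul_assoc _ _ _, ?_, ?_⟩
    · rw [T.actM_map_mul, T.actM_mul]
      group
    · rw [T.actL_map_mul, TCM_mact_equivar, ← T.actL_mul, TCM_mact_mul, TCM_mact_comp]
      group
  · rintro ⟨n, m, l⟩
    constructor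
    · simp only [hmul, one_mul, T.actM_one, T.actL_one, TCM_mact_one_act]
    · simp only [hmul, mul_one, TCM_actM_map_one, TCM_actL_map_one, TCM_mact_one]
  · rintro ⟨n, m, l⟩
    refine ⟨(n⁻¹, (T.actM n⁻¹ m)⁻¹, (mact T (T.actM n⁻¹ m)⁻¹ (T.actL n⁻¹ l))⁻¹), ?_, ?_⟩
    · simp only [hmul, Prod.mk.injEq]
      refine ⟨mul_inv_cancel n, ?_, ?_⟩
      · rw [TCM_actM_inv, ← T.actM_mul, mul_inv_cancel, T.actM_one, mul_inv_cancel]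
      · rw [TCM_actL_inv, TCM_mact_equivar, TCM_actM_inv, ← T.actM_mul, mul_inv_cancel,
          T.actM_one, ← T.actL_mul, mul_inv_cancel, T.actL_one, TCM_mact_inv,
          ← TCM_mact_comp, mul_inv_cancel, TCM_mact_one_act, mul_inv_cancel]
    · simp only [hmul, Prod.mk.injEq]
      exact ⟨inv_mul_cancel n, inv_mul_cancel _, inv_mul_cancel _⟩
end

section
/- Let (L → M) be a crossed module of groups, let P be a set with a left action of L, and let 𝐦 : P → M be an L-equivariant map, i.e. 𝐦(l·p) = ∂₁(l)·𝐦(p) for all l ∈ L, p ∈ P. Then p·l := (^{𝐦(p)}l)·p defines a right action of L on P; this right action commutes with the left action, i.e. l'·(p·l) = (l'·p)·l for all l, l' ∈ L, p ∈ P; and 𝐦 is L-biequivariant: 𝐦(p·l) = 𝐦(p)·∂₁(l) for all p ∈ P, l ∈ L. -/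
/-- A crossed module `(L → M)`: a group homomorphism `d : L →* M` together with a
left action of `M` on `L` by group automorphisms satisfying the Peiffer condition
and equivariance. -/
structure CrossedModule (L M : Type*) [Group L] [Group M] where
  d : L →* M
  act : M → L → L
  act_one : ∀ l : L, act 1 l = l
  act_mul : ∀ (m₁ m₂ : M) (l : L), act (m₁ * m₂) l = act m₁ (act m₂ l)
  act_map_mul : ∀ (m : M) (l₁ l₂ : L), act m (l₁ * l₂) = act m l₁ * act m l₂
  peiffer : ∀ l l' : L, act (d l) l' = l * l' * l⁻¹
  equivar : ∀ (m : M) (l : L), d (act m l) = m * d l * m⁻¹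

/- Since `𝐦(ᵐl · p) = ∂₁(ᵐl) 𝐦(p) = 𝐦(p) ∂₁(l)` for `m = 𝐦(p)`, every identity reduces, after
collecting the left actions into one, to an identity in `L`; the Peiffer condition turns the
twisting by `∂₁(ᵐl)` into conjugation by `ᵐl`, which then cancels. -/

namespace CrossedModule

variable {L M : Type*} [Group L] [Group M] (C : CrossedModule L M)

theorem act_map_one (m : M) : C.act m 1 = 1 :=
  mul_eq_left.mp (by rw [← C.act_map_mul, mul_one] : C.act m 1 * C.act m 1 = C.act m 1)

theorem d_act_mul_self (m : M) (l : L) : C.d (C.act m l) * m = m * C.d l := by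
  rw [C.equivar, inv_mul_cancel_right]

theorem act_d_act_mul (m : M) (l l' : L) :
    C.act (C.d (C.act m l) * m) l' = C.act m l * C.act m l' * (C.act m l)⁻¹ := by
  rw [C.act_mul, C.peiffer]

section RightAction

variable {P : Type*} (aP : L → P → P) (mm : P → M)

def rightAct (p : P) (l : L) : P :=
  aP (C.act (mm p) l) p

variable {aP mm}

theorem rightAct_one (aP_one : ∀ p : P, aP 1 p = p) (p : P) : C.rightAct aP mm p 1 = p := by
  rw [rightAct, act_map_one, aP_one]

theorem mm_rightAct (mm_equiv : ∀ (l : L) (p : P), mm (aP l p) = C.d l * mm p) (p : P) (l : L) :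
    mm (C.rightAct aP mm p l) = mm p * C.d l := by
  rw [rightAct, mm_equiv, d_act_mul_self]

theorem rightAct_mul (aP_mul : ∀ (l l' : L) (p : P), aP (l * l') p = aP l (aP l' p))
    (mm_equiv : ∀ (l : L) (p : P), mm (aP l p) = C.d l * mm p) (p : P) (l l' : L) :
    C.rightAct aP mm p (l * l') = C.rightAct aP mm (C.rightAct aP mm p l) l' := by
  rw [rightAct, rightAct, rightAct, mm_equiv, act_d_act_mul, ← aP_mul, inv_mul_cancel_right,
    C.act_map_mul]

theorem act_rightAct (aP_mul : ∀ (l l' : L) (p : P), aP (l * l') p = aP l (aP l' p))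
    (mm_equiv : ∀ (l : L) (p : P), mm (aP l p) = C.d l * mm p) (l l' : L) (p : P) :
    aP l' (C.rightAct aP mm p l) = C.rightAct aP mm (aP l' p) l := by
  rw [rightAct, rightAct, mm_equiv, C.act_mul, C.peiffer, ← aP_mul, ← aP_mul,
    inv_mul_cancel_right]

end RightAction

end CrossedModule

/-- given a crossed module `(L → M)`, a left `L`-set `P` and an
`L`-equivariant map `𝐦 : P → M`, the formula `p·l := (^{𝐦(p)}l)·p` defines a right
`L`-action on `P` commuting with the left action, and `𝐦` is `L`-biequivariant. -/
theorem statement5 {L M : Type*} [Group L] [Group M] (C : CrossedModule L M)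
    {P : Type*} (aP : L → P → P)
    (aP_one : ∀ p : P, aP 1 p = p)
    (aP_mul : ∀ (l l' : L) (p : P), aP (l * l') p = aP l (aP l' p))
    (mm : P → M)
    (mm_equiv : ∀ (l : L) (p : P), mm (aP l p) = C.d l * mm p) :
    ∃ rAct : P → L → P,
      (∀ (p : P) (l : L), rAct p l = aP (C.act (mm p) l) p) ∧
      (∀ p : P, rAct p 1 = p) ∧
      (∀ (p : P) (l l' : L), rAct p (l * l') = rAct (rAct p l) l') ∧
      (∀ (l l' : L) (p : P), aP l' (rAct p l) = rAct (aP l' p) l) ∧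
      (∀ (p : P) (l : L), mm (rAct p l) = mm p * C.d l) :=
  ⟨C.rightAct aP mm, fun _ _ => rfl, C.rightAct_one aP_one, C.rightAct_mul aP_mul mm_equiv,
    C.act_rightAct aP_mul mm_equiv, C.mm_rightAct mm_equiv⟩
end

section
/- Let (L → M) be a crossed module of groups, X a set, and let (P, π, 𝐦) and (P̃, π̃, 𝐦̃) be two sets over X (π : P → X, π̃ : P̃ → X) with left L-actions preserving the fibres and L-equivariant maps 𝐦 : P → M, 𝐦̃ : P̃ → M (𝐦(l·p) = ∂₁(l)𝐦(p), 𝐦̃(l·p̃) = ∂₁(l)𝐦̃(p̃)). Equip P with the right L-action p·l := (^{𝐦(p)}l)·p, and define on the fibre product P ×_X P̃ the relation (p·l, p̃) ∼ (p, l·p̃) for l ∈ L. Then: (a) the equivalence relation generated by ∼ identifies (p, p̃) and (p', p̃') in the same fibre exactly when (p', p̃') = (p·l, l⁻¹·p̃) for some l ∈ L; (b) the left L-action l'·[p, p̃] := [l'·p, p̃] on the quotient P P̃ := (P ×_X P̃)/∼ is well defined; (c) the map 𝐦𝐦̃([p, p̃]) := 𝐦(p)·𝐦̃(p̃) is well defined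 on P P̃; and (d) 𝐦𝐦̃ is L-equivariant: 𝐦𝐦̃(l·[p, p̃]) = ∂₁(l)·𝐦𝐦̃([p, p̃]). -/
section Statement6

variable {L M : Type*} [Group L] [Group M] (C : CrossedModule L M)
variable {X P Pt : Type*}

/-- The right `L`-action `p·l := (^{𝐦(p)}l)·p` on a left `L`-set with section `𝐦`. -/
def rAct (aP : L → P → P) (mm : P → M) (p : P) (l : L) : P :=
  aP (C.act (mm p) l) p

/-- The fibre product `P ×_X P̃`. -/
def FibProd (pi : P → X) (pit : Pt → X) : Type _ :=
  { pp : P × Pt // pi pp.1 = pit pp.2 }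

/-- The relation `(p·l, p̃) ∼ (p, l·p̃)` on the fibre product. -/
def BGRel (aP : L → P → P) (mm : P → M) (aPt : L → Pt → Pt)
    (pi : P → X) (pit : Pt → X) (x y : FibProd pi pit) : Prop :=
  ∃ l : L, x.1.1 = rAct C aP mm y.1.1 l ∧ y.1.2 = aPt l x.1.2

/-- for two left `L`-sets over `X` with equivariant sections to `M`,
(a) the equivalence relation generated by `(p·l, p̃) ∼ (p, l·p̃)` identifies `(p,p̃)` and
`(p',p̃')` exactly when `(p',p̃') = (p·l, l⁻¹·p̃)` for some `l`;
(b) the left `L`-action `l'·[p,p̃] := [l'·p, p̃]` is well defined on the quotient;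
(c) `𝐦𝐦̃([p,p̃]) := 𝐦(p)·𝐦̃(p̃)` is well defined on the quotient;
(d) `𝐦𝐦̃` is `L`-equivariant. -/
theorem statement6
    (pi : P → X) (pit : Pt → X)
    (aP : L → P → P) (aPt : L → Pt → Pt)
    (aP_one : ∀ p : P, aP 1 p = p)
    (aP_mul : ∀ (l l' : L) (p : P), aP (l * l') p = aP l (aP l' p))
    (aPt_one : ∀ pt : Pt, aPt 1 pt = pt)
    (aPt_mul : ∀ (l l' : L) (pt : Pt), aPt (l * l') pt = aPt l (aPt l' pt))
    (aP_fib : ∀ (l : L) (p : P), pi (aP l p) = pi p)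
    (aPt_fib : ∀ (l : L) (pt : Pt), pit (aPt l pt) = pit pt)
    (mm : P → M) (mmt : Pt → M)
    (mm_equiv : ∀ (l : L) (p : P), mm (aP l p) = C.d l * mm p)
    (mmt_equiv : ∀ (l : L) (pt : Pt), mmt (aPt l pt) = C.d l * mmt pt) :
    (∀ x y : FibProd pi pit,
      Relation.EqvGen (BGRel C aP mm aPt pi pit) x y ↔
        ∃ l : L, y.1.1 = rAct C aP mm x.1.1 l ∧ y.1.2 = aPt l⁻¹ x.1.2) ∧
    ∃ act' : L → Quot (BGRel C aP mm aPt pi pit) → Quot (BGRel C aP mm aPt pi pit),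
      (∀ (l' : L) (x y : FibProd pi pit), y.1.1 = aP l' x.1.1 → y.1.2 = x.1.2 →
        act' l' (Quot.mk _ x) = Quot.mk _ y) ∧
      ∃ mmp : Quot (BGRel C aP mm aPt pi pit) → M,
        (∀ x : FibProd pi pit, mmp (Quot.mk _ x) = mm x.1.1 * mmt x.1.2) ∧
        (∀ (l : L) (q : Quot (BGRel C aP mm aPt pi pit)),
          mmp (act' l q) = C.d l * mmp q) := by
  classical
  -- `C.act m 1 = 1`
  have act1 : ∀ m : M, C.act m 1 = 1 := by
    intro m
    have h := C.act_map_mul m 1 1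
    rw [one_mul] at h
    exact left_eq_mul.mp h
  -- `𝐦(p·l) = 𝐦(p) * d l`
  have mm_r : ∀ (p : P) (l : L), mm (rAct C aP mm p l) = mm p * C.d l := by
    intro p l
    rw [rAct, mm_equiv, C.equivar, mul_assoc, mul_assoc, inv_mul_cancel, mul_one]
  have r_one : ∀ p : P, rAct C aP mm p 1 = p := by
    intro p; rw [rAct, act1, aP_one]
  have r_mul : ∀ (p : P) (l l' : L),
      rAct C aP mm (rAct C aP mm p l) l' = rAct C aP mm p (l * l') := by
    intro p l l'
    have h : l * l' * l⁻¹ * l = l * l' := by group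
    rw [rAct, mm_r, rAct, rAct, ← aP_mul, C.act_mul, C.peiffer, ← C.act_map_mul, h]
  -- BGRel is reflexive, symmetric, transitive
  have brefl : ∀ x, BGRel C aP mm aPt pi pit x x := by
    intro x; exact ⟨1, (r_one _).symm, (aPt_one _).symm⟩
  have bsymm : ∀ x y, BGRel C aP mm aPt pi pit x y → BGRel C aP mm aPt pi pit y x := by
    rintro x y ⟨l, h1, h2⟩
    refine ⟨l⁻¹, ?_, ?_⟩
    · rw [h1, r_mul, mul_inv_cancel, r_one]
    · rw [h2, ← aPt_mul, inv_mul_cancel, aPt_one]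
  have btrans : ∀ x y z, BGRel C aP mm aPt pi pit x y → BGRel C aP mm aPt pi pit y z →
      BGRel C aP mm aPt pi pit x z := by
    rintro x y z ⟨l, h1, h2⟩ ⟨l', h1', h2'⟩
    refine ⟨l' * l, ?_, ?_⟩
    · rw [h1, h1', r_mul]
    · rw [h2', h2, ← aPt_mul]
  constructor
  · -- part (a)
    intro x y
    constructor
    · intro h
      have key : BGRel C aP mm aPt pi pit x y := by
        induction h with
        | rel a b hab => exact hab
        | refl a => exact brefl a
        | symm a b _ ih => exact bsymm _ _ ih
        | trans a b c _ _ ih1 ih2 => exact btrans _ _ _ ih1 ih2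
      obtain ⟨l, h1, h2⟩ := key
      refine ⟨l⁻¹, ?_, ?_⟩
      · rw [h1, r_mul, mul_inv_cancel, r_one]
      · rw [inv_inv]; exact h2
    · rintro ⟨l, h1, h2⟩
      apply Relation.EqvGen.rel
      refine ⟨l⁻¹, ?_, ?_⟩
      · rw [h1, r_mul, mul_inv_cancel, r_one]
      · exact h2
  · -- parts (b), (c), (d)
    refine ⟨fun l' => Quot.map
        (fun x : FibProd pi pit => ⟨(aP l' x.1.1, x.1.2), by
          show pi (aP l' x.1.1) = pit x.1.2
          rw [aP_fib]; exact x.2⟩)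
        ?_, ?_, ?_⟩
    · -- well-definedness of the action
      rintro x y ⟨l, h1, h2⟩
      refine ⟨l, ?_, h2⟩
      show aP l' x.1.1 = rAct C aP mm (aP l' y.1.1) l
      rw [h1, rAct, rAct, mm_equiv, C.act_mul, C.peiffer, ← aP_mul, ← aP_mul]
      have h : l' * C.act (mm y.1.1) l = l' * C.act (mm y.1.1) l * l'⁻¹ * l' := by group
      rw [← h]
    · -- the action has the stated form
      intro l' x y h1 h2
      show Quot.mk _ _ = Quot.mk _ y
      congr 1
      apply Subtype.ext
      apply Prod.ext_iff.mpr
      exact ⟨h1.symm, h2.symm⟩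
    · -- the section 𝐦𝐦̃
      refine ⟨Quot.lift (fun x : FibProd pi pit => mm x.1.1 * mmt x.1.2) ?_, ?_, ?_⟩
      · rintro x y ⟨l, h1, h2⟩
        show mm x.1.1 * mmt x.1.2 = mm y.1.1 * mmt y.1.2
        rw [h1, h2, mm_r, mmt_equiv, mul_assoc]
      · intro x; rfl
      · intro l q
        induction q using Quot.ind with
        | _ x =>
          show mm (aP l x.1.1) * mmt x.1.2 = C.d l * (mm x.1.1 * mmt x.1.2)
          rw [mm_equiv, mul_assoc]

end Statement6
end

section
/- Let (L → M) be a crossed module of groups with ∂₁ : L → M injective, I an index set, and let m : I × I → M and l : I × I × I → L be families satisfying m_{ij} m_{jk} = ∂₁(l_{ijk}) · m_{ik} for all i, j, k ∈ I. Then the families l_{ijk} automatically satisfy the remaining 2-cocycle condition: l_{ijk} · l_{ikl} = ^{m_{ij}}l_{jkl} · l_{ijl} for all i, j, k, l ∈ I. -/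
/-- if `∂₁` is injective and `m_{ij} m_{jk} = ∂₁(l_{ijk}) m_{ik}`, then the
remaining 2-cocycle condition `l_{ijk} l_{ikl} = ^{m_{ij}}l_{jkl} · l_{ijl}` holds
automatically. -/
theorem statement14 {L M : Type*} [Group L] [Group M] (C : CrossedModule L M)
    (hinj : Function.Injective C.d) {I : Type*}
    (m : I → I → M) (l : I → I → I → L)
    (h : ∀ i j k : I, m i j * m j k = C.d (l i j k) * m i k) :
    ∀ i j k p : I, l i j k * l i k p = C.act (m i j) (l j k p) * l i j p := by
  intro i j k p
  apply hinj
  have hd : ∀ a b c : I, C.d (l a b c) = m a b * m b c * (m a c)⁻¹ := by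
    intro a b c
    have := h a b c
    group at this ⊢
    rw [this]
    group
  simp only [map_mul, C.equivar, hd]
  group
end

section
/- Let (L → M → N) be a 2-crossed module of groups with ∂₁ : L → M injective, I an index set, and let n : I × I → N, m : I × I × I → M, l : I × I × I × I → L be families satisfying n_{ij} n_{jk} = ∂₂(m_{ijk}) · n_{ik} and m_{ijk} m_{ikl} = ∂₁(l_{ijkl}) · ^{n_{ij}}m_{jkl} · m_{ijl} for all indices. Then the families l_{ijkl} automatically satisfy the 3-cocycle coherence relation: l_{ijkl} · ^{(^{n_{ij}}m_{jkl})}(l_{ijlm}) · ^{n_{ij}}l_{jklm} = ^{m_{ijk}}l_{iklm} · {m_{ijk}, ^{n_{ik}}m_{klm}} · ^{(^{n_{ij} n_{jk}}m_{klm})}(l_{ijkm}) for all i, j, k, l, m ∈ I. -/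
/-!
Since `∂₁` is injective it suffices to compare images in `M`. By the second cocycle relation
`∂₁ l_{ijkl}` is the defect `m_{ijk} m_{ikl} (ⁿⁱʲm_{jkl} · m_{ijl})⁻¹`, `∂₁` turns the induced
action into conjugation and `∂₁ {m₁, m₂} = m₁ m₂ m₁⁻¹ (^{∂₂ m₁}m₂)⁻¹` by axiom (ii). With these,
both sides of the coherence relation map to the defect between the two ways of reducing
`m_{ijk} m_{ikl} m_{ilm}`; on the right-hand side the first cocycle relation
`∂₂(m_{ijk}) n_{ik} = n_{ij} n_{jk}` makes the Peiffer lifting term cancel.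
-/

namespace TwoCrossedModule

variable {L M N : Type*} [Group L] [Group M] [Group N] (T : TwoCrossedModule L M N)

theorem actM_inv (g : N) (x : M) : T.actM g x⁻¹ = (T.actM g x)⁻¹ :=
  map_inv (MonoidHom.mk' (T.actM g) (T.actM_map_mul g)) x

theorem d1_pf (x y : M) : T.d1 (T.pf x y) = x * y * x⁻¹ * (T.actM (T.d2 x) y)⁻¹ := by
  rw [T.ax_ii]
  group

theorem d1_mact (x : M) (y : L) : T.d1 (mact T x y) = x * T.d1 y * x⁻¹ := by
  rw [mact, map_mul, d1_pf, map_inv, T.d2_d1, inv_one, T.actM_one]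
  group

end TwoCrossedModule

open TwoCrossedModule in
/-- in a 2-crossed module `(L → M → N)` with `∂₁` injective, families
`(n_{ij}, m_{ijk}, l_{ijkl})` satisfying the first two 3-cocycle relations automatically
satisfy the coherence relation
`l_{ijkl} · ^{^{n_{ij}}m_{jkl}}(l_{ijlm}) · ^{n_{ij}}l_{jklm}
  = ^{m_{ijk}}l_{iklm} · {m_{ijk}, ^{n_{ik}}m_{klm}} · ^{^{n_{ij}n_{jk}}m_{klm}}(l_{ijkm})`,
where `^{m}l` is the induced `M`-action `mact`. -/
theorem statement17 {L M N : Type*} [Group L] [Group M] [Group N]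
    (T : TwoCrossedModule L M N) (hinj : Function.Injective T.d1) {I : Type*}
    (n : I → I → N) (m : I → I → I → M) (l : I → I → I → I → L)
    (h1 : ∀ i j k : I, n i j * n j k = T.d2 (m i j k) * n i k)
    (h2 : ∀ i j k p : I,
      m i j k * m i k p = T.d1 (l i j k p) * T.actM (n i j) (m j k p) * m i j p) :
    ∀ i j k p q : I,
      l i j k p * mact T (T.actM (n i j) (m j k p)) (l i j p q) *
          T.actL (n i j) (l j k p q) =
        mact T (m i j k) (l i k p q) * T.pf (m i j k) (T.actM (n i k) (m k p q)) *
          mact T (T.actM (n i j * n j k) (m k p q)) (l i j k q) := by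
  intro i j k p q
  have d1_l : ∀ a b c d : I, T.d1 (l a b c d) =
      m a b c * m a c d * (T.actM (n a b) (m b c d) * m a b d)⁻¹ := by
    intro a b c d
    rw [h2, mul_inv_rev]
    group
  have d2_m_act : T.actM (T.d2 (m i j k)) (T.actM (n i k) (m k p q)) =
      T.actM (n i j) (T.actM (n j k) (m k p q)) := by
    rw [← T.actM_mul, ← T.actM_mul, h1]
  apply hinj
  trans m i j k * m i k p * m i p q *
    (T.actM (n i j * n j k) (m k p q) * T.actM (n i j) (m j k q) * m i j q)⁻¹
  · simp only [map_mul, d1_mact, d1_l, T.d1_equivar, T.actM_map_mul, mul_inv_rev, actM_inv,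
      T.actM_mul]
    group
  · simp only [map_mul, d1_mact, d1_pf, d1_l, mul_inv_rev, T.actM_mul, d2_m_act]
    group
end

section
/- Let (L → M) be a crossed module of groups with structure map δ : L → M, let A := ker δ, and assume that A is contained in the center of L and that M acts trivially on A (ᵐa = a for all m ∈ M, a ∈ A). Let I be an index set and let m : I × I → M and l : I × I × I → L be families satisfying m_{ij} m_{jk} = δ(l_{ijk}) · m_{ik} for all i, j, k ∈ I. Define a_{ijkl} := l_{ijk} · l_{ikl} · (^{m_{ij}}l_{jkl} · l_{ijl})⁻¹. Then a_{ijkl} ∈ A for all indices, and the a_{ijkl} satisfy the abelian 3-cocycle identity a_{ijkl} · a_{ijlm} · a_{jklm} = a_{iklm} · a_{ijkm} for all i, j, k, l, m ∈ I. -/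
section Aux

variable {L M : Type*} [Group L] [Group M] (C : CrossedModule L M)
  {I : Type*} (m : I → I → M) (l : I → I → I → L)

/-- The obstruction defect `a_{ijkp}`. -/
def defectA (i j k p : I) : L :=
  l i j k * l i k p * (C.act (m i j) (l j k p) * l i j p)⁻¹

lemma defectD (i j k p : I) :
    l i j k * l i k p = defectA C m l i j k p * (C.act (m i j) (l j k p) * l i j p) := by
  unfold defectA; group

lemma defectA_mem (h : ∀ i j k : I, m i j * m j k = C.d (l i j k) * m i k) (i j k p : I) :
    defectA C m l i j k p ∈ C.d.ker := by
  have hd : ∀ i j k, C.d (l i j k) = m i j * m j k * (m i k)⁻¹ := by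
    intro i j k
    rw [eq_mul_inv_iff_mul_eq]
    exact (h i j k).symm
  simp only [MonoidHom.mem_ker, defectA, map_mul, map_inv, C.equivar, hd]
  group

lemma actComp (h : ∀ i j k : I, m i j * m j k = C.d (l i j k) * m i k) (i j k : I) (x : L) :
    C.act (m i j * m j k) x = l i j k * C.act (m i k) x * (l i j k)⁻¹ := by
  rw [h i j k, C.act_mul, C.peiffer]

end Aux

/-- let `(L → M)` be a crossed module with `A := ker δ` central in `L` and
acted on trivially by `M`. For families with `m_{ij} m_{jk} = δ(l_{ijk}) m_{ik}`, the
defect `a_{ijkl} := l_{ijk} l_{ikl} (^{m_{ij}}l_{jkl} · l_{ijl})⁻¹` lies in `A` and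
satisfies the abelian 3-cocycle identity. -/
theorem statement18 {L M : Type*} [Group L] [Group M] (C : CrossedModule L M)
    (hcentral : ∀ a ∈ C.d.ker, a ∈ Subgroup.center L)
    (htrivial : ∀ (mm : M), ∀ a ∈ C.d.ker, C.act mm a = a)
    {I : Type*} (m : I → I → M) (l : I → I → I → L)
    (h : ∀ i j k : I, m i j * m j k = C.d (l i j k) * m i k) :
    (∀ i j k p : I,
      l i j k * l i k p * (C.act (m i j) (l j k p) * l i j p)⁻¹ ∈ C.d.ker) ∧
    (∀ i j k p q : I,
      (l i j k * l i k p * (C.act (m i j) (l j k p) * l i j p)⁻¹) *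
          (l i j p * l i p q * (C.act (m i j) (l j p q) * l i j q)⁻¹) *
          (l j k p * l j p q * (C.act (m j k) (l k p q) * l j k q)⁻¹) =
        (l i k p * l i p q * (C.act (m i k) (l k p q) * l i k q)⁻¹) *
          (l i j k * l i k q * (C.act (m i j) (l j k q) * l i j q)⁻¹)) := by
  have hmem : ∀ i j k p : I, defectA C m l i j k p ∈ C.d.ker := defectA_mem C m l h
  refine ⟨hmem, ?_⟩
  intro i j k p q
  -- centrality helper: move a defect to the left past one factor
  have hswap : ∀ (i' j' k' p' : I) (g rest : L),
      g * (defectA C m l i' j' k' p' * rest) = defectA C m l i' j' k' p' * (g * rest) := by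
    intro i' j' k' p' g rest
    rw [← mul_assoc, Subgroup.mem_center_iff.mp (hcentral _ (hmem i' j' k' p')) g, mul_assoc]
  have htriv : ∀ (mm : M) (i' j' k' p' : I),
      C.act mm (defectA C m l i' j' k' p') = defectA C m l i' j' k' p' :=
    fun mm i' j' k' p' => htrivial mm _ (hmem i' j' k' p')
  have hE1 : defectA C m l i j k p * (defectA C m l i j p q * (defectA C m l j k p q *
      (C.act (m i j * m j k) (l k p q) * (C.act (m i j) (l j k q) * l i j q)))) =
      l i j k * l i k p * l i p q := by
    calc defectA C m l i j k p * (defectA C m l i j p q * (defectA C m l j k p q *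
          (C.act (m i j * m j k) (l k p q) * (C.act (m i j) (l j k q) * l i j q))))
        = defectA C m l i j k p * (defectA C m l i j p q * (C.act (m i j) (defectA C m l j k p q) *
            (C.act (m i j) (C.act (m j k) (l k p q)) * (C.act (m i j) (l j k q) * l i j q)))) := by
          rw [htriv, ← C.act_mul]
      _ = defectA C m l i j k p * (defectA C m l i j p q *
            (C.act (m i j) (defectA C m l j k p q * (C.act (m j k) (l k p q) * l j k q)) *
              l i j q)) := by
          simp only [C.act_map_mul]; group
      _ = defectA C m l i j k p * (defectA C m l i j p q *
            (C.act (m i j) (l j k p * l j p q) * l i j q)) := by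
          rw [← defectD C m l j k p q]
      _ = defectA C m l i j k p * (C.act (m i j) (l j k p) *
            (defectA C m l i j p q * (C.act (m i j) (l j p q) * l i j q))) := by
          rw [hswap i j p q (C.act (m i j) (l j k p)) (C.act (m i j) (l j p q) * l i j q)]
          simp only [C.act_map_mul]; group
      _ = defectA C m l i j k p * (C.act (m i j) (l j k p) * (l i j p * l i p q)) := by
          rw [← defectD C m l i j p q]
      _ = (defectA C m l i j k p * (C.act (m i j) (l j k p) * l i j p)) * l i p q := by group
      _ = l i j k * l i k p * l i p q := by rw [← defectD C m l i j k p]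
  have hE2 : defectA C m l i k p q * (defectA C m l i j k q *
      (C.act (m i j * m j k) (l k p q) * (C.act (m i j) (l j k q) * l i j q))) =
      l i j k * l i k p * l i p q := by
    calc defectA C m l i k p q * (defectA C m l i j k q *
          (C.act (m i j * m j k) (l k p q) * (C.act (m i j) (l j k q) * l i j q)))
        = defectA C m l i k p q * (C.act (m i j * m j k) (l k p q) *
            (defectA C m l i j k q * (C.act (m i j) (l j k q) * l i j q))) := by
          rw [hswap i j k q (C.act (m i j * m j k) (l k p q))
            (C.act (m i j) (l j k q) * l i j q)]
      _ = defectA C m l i k p q * (C.act (m i j * m j k) (l k p q) * (l i j k * l i k q)) := by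
          rw [← defectD C m l i j k q]
      _ = defectA C m l i k p q * ((l i j k * C.act (m i k) (l k p q) * (l i j k)⁻¹) *
            (l i j k * l i k q)) := by
          rw [actComp C m l h]
      _ = l i j k * (defectA C m l i k p q * (C.act (m i k) (l k p q) * l i k q)) := by
          rw [hswap i k p q (l i j k) (C.act (m i k) (l k p q) * l i k q)]
          group
      _ = l i j k * (l i k p * l i p q) := by rw [← defectD C m l i k p q]
      _ = l i j k * l i k p * l i p q := by group
  have key : defectA C m l i j k p * defectA C m l i j p q * defectA C m l j k p q =
      defectA C m l i k p q * defectA C m l i j k q := by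
    have h' : (defectA C m l i j k p * defectA C m l i j p q * defectA C m l j k p q) *
        (C.act (m i j * m j k) (l k p q) * (C.act (m i j) (l j k q) * l i j q)) =
        (defectA C m l i k p q * defectA C m l i j k q) *
        (C.act (m i j * m j k) (l k p q) * (C.act (m i j) (l j k q) * l i j q)) := by
      rw [mul_assoc, mul_assoc, mul_assoc]
      exact hE1.trans hE2.symm
    exact mul_right_cancel h'
  exact key
end

section
/- Let (L → M) be a crossed module of groups with structure map δ : L → M, let A := ker δ, and assume that A is contained in the center of L and that M acts trivially on A. Let I be an index set and m : I × I → M a family. Then: (a) if (m, l) and (m, l') are two 2-cocycles with values in (L → M) having the same M-component m, then c_{ijk} := l'_{ijk} · l_{ijk}⁻¹ takes values in A and satisfies the abelian 2-cocycle identity c_{ijk} · c_{ikl} = c_{jkl} · c_{ijl} for all i, j, k, l ∈ I; (b) conversely, if (m, l) is a 2-cocycle with values in (L → M) and c : I × I × I → A is a family satisfying c_{ijk} · c_{ikl} = c_{jkl} · c_{ijl}, then (m, c·l) with (c·l)_{ijk} := c_{ijk} · l_{ijk} is again a 2-cocycle with values in (L → M). -/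
/-- A 2-cocycle with values in the crossed module `(L → M)`, indexed by `I`. -/
def IsCocycle2 {L M : Type*} [Group L] [Group M] (C : CrossedModule L M) {I : Type*}
    (m : I → I → M) (l : I → I → I → L) : Prop :=
  (∀ i j k : I, m i j * m j k = C.d (l i j k) * m i k) ∧
    (∀ i j k p : I, l i j k * l i k p = C.act (m i j) (l j k p) * l i j p)

/-- let `(L → M)` be a crossed module with `A := ker δ` central in `L` and
acted on trivially by `M`.
(a) Two 2-cocycles with the same `M`-component differ by an `A`-valued abelian 2-cocycle
    `c_{ijk} := l'_{ijk} l_{ijk}⁻¹`.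
(b) Multiplying the `L`-component of a 2-cocycle by an `A`-valued abelian 2-cocycle
    yields again a 2-cocycle. -/
theorem statement19 {L M : Type*} [Group L] [Group M] (C : CrossedModule L M)
    (hcentral : ∀ a ∈ C.d.ker, a ∈ Subgroup.center L)
    (htrivial : ∀ (mm : M), ∀ a ∈ C.d.ker, C.act mm a = a)
    {I : Type*} (m : I → I → M) :
    (∀ l l' : I → I → I → L, IsCocycle2 C m l → IsCocycle2 C m l' →
      (∀ i j k : I, l' i j k * (l i j k)⁻¹ ∈ C.d.ker) ∧
      (∀ i j k p : I,
        (l' i j k * (l i j k)⁻¹) * (l' i k p * (l i k p)⁻¹) =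
          (l' j k p * (l j k p)⁻¹) * (l' i j p * (l i j p)⁻¹))) ∧
    (∀ (l : I → I → I → L) (c : I → I → I → L), IsCocycle2 C m l →
      (∀ i j k : I, c i j k ∈ C.d.ker) →
      (∀ i j k p : I, c i j k * c i k p = c j k p * c i j p) →
      IsCocycle2 C m (fun i j k => c i j k * l i j k)) := by

  constructor
  · intro l l' hl hl'
    have hker : ∀ i j k : I, l' i j k * (l i j k)⁻¹ ∈ C.d.ker := by
      intro i j k
      have hd : C.d (l' i j k) = C.d (l i j k) :=
        mul_right_cancel ((hl'.1 i j k).symm.trans (hl.1 i j k))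
      simp [MonoidHom.mem_ker, hd]
    refine ⟨hker, ?_⟩
    intro i j k p
    set c : I → I → I → L := fun i j k => l' i j k * (l i j k)⁻¹ with hcdef
    have hc : ∀ i j k : I, l' i j k = c i j k * l i j k := by
      intro i j k; simp [hcdef]
    have hcen : ∀ (i j k : I) (g : L), c i j k * g = g * c i j k := fun i j k g =>
      ((Subgroup.mem_center_iff.mp (hcentral _ (hker i j k)) g)).symm
    have htr : ∀ (mm : M) (i j k : I), C.act mm (c i j k) = c i j k := fun mm i j k =>
      htrivial mm _ (hker i j k)
    have e1 := hl.2 i j k p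
    have e2 := hl'.2 i j k p
    rw [hc i j k, hc i k p, hc j k p, hc i j p, C.act_map_mul, htr] at e2
    have key : c i j k * c i k p * (l i j k * l i k p) =
        c j k p * c i j p * (l i j k * l i k p) := by
      calc c i j k * c i k p * (l i j k * l i k p)
          = c i j k * (c i k p * l i j k) * l i k p := by group
        _ = c i j k * (l i j k * c i k p) * l i k p := by rw [hcen i k p (l i j k)]
        _ = c i j k * l i j k * (c i k p * l i k p) := by group
        _ = c j k p * C.act (m i j) (l j k p) * (c i j p * l i j p) := e2
        _ = c j k p * (C.act (m i j) (l j k p) * c i j p) * l i j p := by group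
        _ = c j k p * (c i j p * C.act (m i j) (l j k p)) * l i j p := by
              rw [← hcen i j p (C.act (m i j) (l j k p))]
        _ = c j k p * c i j p * (C.act (m i j) (l j k p) * l i j p) := by group
        _ = c j k p * c i j p * (l i j k * l i k p) := by rw [← e1]
    exact mul_right_cancel key
  · intro l c hl hker hab
    have hcen : ∀ (i j k : I) (g : L), c i j k * g = g * c i j k := fun i j k g =>
      ((Subgroup.mem_center_iff.mp (hcentral _ (hker i j k)) g)).symm
    have htr : ∀ (mm : M) (i j k : I), C.act mm (c i j k) = c i j k := fun mm i j k =>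
      htrivial mm _ (hker i j k)
    constructor
    · intro i j k
      have h1 := hl.1 i j k
      have hd : C.d (c i j k) = 1 := hker i j k
      simp only [map_mul, hd, one_mul]
      exact h1
    · intro i j k p
      have e1 := hl.2 i j k p
      show c i j k * l i j k * (c i k p * l i k p) =
        C.act (m i j) (c j k p * l j k p) * (c i j p * l i j p)
      rw [C.act_map_mul, htr]
      calc c i j k * l i j k * (c i k p * l i k p)
          = c i j k * (l i j k * c i k p) * l i k p := by group
        _ = c i j k * (c i k p * l i j k) * l i k p := by rw [← hcen i k p (l i j k)]
        _ = c i j k * c i k p * (l i j k * l i k p) := by group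
        _ = c j k p * c i j p * (C.act (m i j) (l j k p) * l i j p) := by rw [hab, e1]
        _ = c j k p * (c i j p * C.act (m i j) (l j k p)) * l i j p := by group
        _ = c j k p * (C.act (m i j) (l j k p) * c i j p) * l i j p := by
              rw [hcen i j p (C.act (m i j) (l j k p))]
        _ = c j k p * C.act (m i j) (l j k p) * (c i j p * l i j p) := by group
end
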